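/- arXiv:1307.2277 — 2 statements merged into one kernel-verified Lean document; each statement's English description precedes it below -/
import Mathlib

section
/- Let f : ℝ → ℝ be measurable with ∫_{-∞}^{∞} f(y)² φ(y) dy < ∞, where φ is the standard Gaussian density. Define G(x) = ∫_0^x f(y) dy. Then ∫_{-∞}^{∞} G(x)² φ(x) dx ≤ ∫_{-∞}^{∞} f(y)² φ(y) dy, i.e. E[G(B₁)²] ≤ E[f(B₁)²] for a standard Gaussian B₁. -/
/-!
By Cauchy–Schwarz, `G(x)² ≤ |x| ∫_{Ι 0 x} f²`. Integrating against `φ` and exchanging the order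
of integration (Tonelli), the weight attached to `f(y)²` is `∫ |x| φ(x) dx` over the `x` with `y`
between `0` and `x`, i.e. over `[y, ∞)` for `y > 0` and `(-∞, y)` for `y ≤ 0`. Since `φ' = -x φ`,
this weight equals `φ(y)` exactly.
-/

open MeasureTheory

/-- The standard Gaussian density on `ℝ`. -/
noncomputable def stdGaussianDensity (x : ℝ) : ℝ :=
  (Real.sqrt (2 * Real.pi))⁻¹ * Real.exp (-x ^ 2 / 2)

open Filter Set
open scoped ENNReal Topology Interval

namespace stdGaussianDensity

theorem nonneg (x : ℝ) : 0 ≤ stdGaussianDensity x := by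
  unfold stdGaussianDensity
  positivity

@[fun_prop]
theorem measurable : Measurable stdGaussianDensity := by
  unfold stdGaussianDensity
  fun_prop

theorem neg (x : ℝ) : stdGaussianDensity (-x) = stdGaussianDensity x := by
  simp only [stdGaussianDensity, neg_sq]

theorem hasDerivAt (x : ℝ) : HasDerivAt stdGaussianDensity (-(x * stdGaussianDensity x)) x := by
  have hq : HasDerivAt (fun y : ℝ => -y ^ 2 / 2) (-x) x :=
    ((hasDerivAt_pow 2 x).neg.div_const 2).congr_deriv (by norm_num; ring)
  exact (hq.exp.const_mul (Real.sqrt (2 * Real.pi))⁻¹).congr_deriv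
    (by simp only [stdGaussianDensity]; ring)

theorem integrable_id_mul : Integrable fun x => x * stdGaussianDensity x := by
  have h := (integrable_mul_exp_neg_mul_sq (b := 1 / 2) (by norm_num)).const_mul
    (Real.sqrt (2 * Real.pi))⁻¹
  refine h.congr (.of_forall fun x => ?_)
  simp only [stdGaussianDensity]
  ring_nf

theorem tendsto_atTop : Tendsto stdGaussianDensity atTop (𝓝 0) := by
  have hq : Tendsto (fun x : ℝ => -x ^ 2 / 2) atTop atBot :=
    ((tendsto_pow_atTop two_ne_zero).atTop_div_const_of_neg (by norm_num : (-2 : ℝ) < 0)).congr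
      fun x => by ring
  have h := (Real.tendsto_exp_atBot.comp hq).const_mul (Real.sqrt (2 * Real.pi))⁻¹
  rwa [mul_zero] at h

theorem integral_Ioi_id_mul (y : ℝ) :
    ∫ x in Ioi y, x * stdGaussianDensity x = stdGaussianDensity y := by
  have h := integral_Ioi_of_hasDerivAt_of_tendsto' (f := fun x => -stdGaussianDensity x) (a := y)
    (fun x _ => (hasDerivAt x).neg) (by simpa using integrable_id_mul.integrableOn)
    (by simpa using tendsto_atTop.neg)
  simpa using h

theorem lintegral_Ioi_abs_mul {y : ℝ} (hy : 0 ≤ y) :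
    ∫⁻ x in Ioi y, ENNReal.ofReal (|x| * stdGaussianDensity x)
      = ENNReal.ofReal (stdGaussianDensity y) := by
  have hpos : ∀ x ∈ Ioi y, 0 ≤ x := fun x hx => hy.trans (le_of_lt hx)
  rw [setLIntegral_congr_fun measurableSet_Ioi fun x hx => by rw [abs_of_nonneg (hpos x hx)],
    ← ofReal_integral_eq_lintegral_ofReal integrable_id_mul.integrableOn, integral_Ioi_id_mul]
  exact (ae_restrict_iff' measurableSet_Ioi).mpr
    (.of_forall fun x hx => mul_nonneg (hpos x hx) (nonneg x))

theorem lintegral_Iio_abs_mul {y : ℝ} (hy : y ≤ 0) :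
    ∫⁻ x in Iio y, ENNReal.ofReal (|x| * stdGaussianDensity x)
      = ENNReal.ofReal (stdGaussianDensity y) := by
  have h := (Measure.measurePreserving_neg (volume : Measure ℝ)).setLIntegral_comp_preimage_emb
    (Homeomorph.neg ℝ).measurableEmbedding (fun x => ENNReal.ofReal (|x| * stdGaussianDensity x))
    (Iio y)
  rw [show Neg.neg ⁻¹' Iio y = Ioi (-y) from neg_Iio y] at h
  simp only [abs_neg, neg] at h
  rw [← h, lintegral_Ioi_abs_mul (neg_nonneg.mpr hy), neg]

theorem lintegral_setOf_mem_uIoc_abs_mul (y : ℝ) :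
    ∫⁻ x in {x | y ∈ Ι 0 x}, ENNReal.ofReal (|x| * stdGaussianDensity x)
      = ENNReal.ofReal (stdGaussianDensity y) := by
  rcases le_or_gt y 0 with hy | hy
  · have hset : {x | y ∈ Ι 0 x} = Iio y := by
      ext x
      simp only [mem_ofPred_eq, mem_uIoc, mem_Iio]
      constructor
      · rintro (⟨h0, hx⟩ | ⟨hx, -⟩) <;> linarith
      · exact fun hx => Or.inr ⟨hx, hy⟩
    rw [hset, lintegral_Iio_abs_mul hy]
  · have hset : {x | y ∈ Ι 0 x} = Ici y := by
      ext x
      simp only [mem_ofPred_eq, mem_uIoc, mem_Ici]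
      constructor
      · rintro (⟨-, hx⟩ | ⟨hx, h0⟩) <;> linarith
      · exact fun hx => Or.inl ⟨hy, hx⟩
    rw [hset, ← setLIntegral_congr Ioi_ae_eq_Ici, lintegral_Ioi_abs_mul hy.le]

end stdGaussianDensity

theorem sq_lintegral_le_measure_univ_mul_lintegral_sq {α : Type*} [MeasurableSpace α]
    {μ : Measure α} {g : α → ℝ≥0∞} (hg : AEMeasurable g μ) :
    (∫⁻ a, g a ∂μ) ^ 2 ≤ μ univ * ∫⁻ a, g a ^ 2 ∂μ := by
  have := ENNReal.lintegral_mul_le_Lp_mul_Lq μ Real.HolderConjugate.two_two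
    (f := fun _ => 1) aemeasurable_const hg
  simp only [Pi.mul_apply, one_mul, one_pow, lintegral_const, ENNReal.rpow_two] at this
  calc (∫⁻ a, g a ∂μ) ^ 2
      ≤ (μ univ ^ (1 / 2 : ℝ) * (∫⁻ a, g a ^ 2 ∂μ) ^ (1 / 2 : ℝ)) ^ 2 := by gcongr
    _ = μ univ * ∫⁻ a, g a ^ 2 ∂μ := by
      rw [mul_pow, ← ENNReal.rpow_natCast, ← ENNReal.rpow_natCast, ← ENNReal.rpow_mul,
        ← ENNReal.rpow_mul]
      norm_num

theorem ofReal_sq_intervalIntegral_le {μ : Measure ℝ} {f : ℝ → ℝ} {a b : ℝ}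
    (hf : AEMeasurable f (μ.restrict (Ι a b))) :
    ENNReal.ofReal ((∫ t in a..b, f t ∂μ) ^ 2)
      ≤ μ (Ι a b) * ∫⁻ t in Ι a b, ENNReal.ofReal (f t ^ 2) ∂μ := by
  have hG : ‖∫ t in a..b, f t ∂μ‖ₑ ≤ ∫⁻ t in Ι a b, ‖f t‖ₑ ∂μ := by
    rw [← enorm_norm, intervalIntegral.norm_integral_eq_norm_integral_uIoc, enorm_norm]
    exact enorm_integral_le_lintegral_enorm _
  calc ENNReal.ofReal ((∫ t in a..b, f t ∂μ) ^ 2) = ‖∫ t in a..b, f t ∂μ‖ₑ ^ 2 := by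
        rw [Real.enorm_eq_ofReal_abs, ← ENNReal.ofReal_pow (abs_nonneg _), sq_abs]
    _ ≤ (∫⁻ t in Ι a b, ‖f t‖ₑ ∂μ) ^ 2 := by gcongr
    _ ≤ μ (Ι a b) * ∫⁻ t in Ι a b, ‖f t‖ₑ ^ 2 ∂μ := by
        simpa only [Measure.restrict_apply_univ] using
          sq_lintegral_le_measure_univ_mul_lintegral_sq hf.enorm
    _ = μ (Ι a b) * ∫⁻ t in Ι a b, ENNReal.ofReal (f t ^ 2) ∂μ := by
        simp only [Real.enorm_eq_ofReal_abs, ← ENNReal.ofReal_pow (abs_nonneg _), sq_abs]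

theorem lintegral_mul_setLIntegral_comm {α β : Type*} [MeasurableSpace α] [MeasurableSpace β]
    {μ : Measure α} {ν : Measure β} [SFinite μ] [SFinite ν] {s : Set (α × β)}
    (hs : MeasurableSet s) {g : α → ℝ≥0∞} {h : β → ℝ≥0∞} (hg : AEMeasurable g μ)
    (hh : AEMeasurable h ν) :
    ∫⁻ x, g x * ∫⁻ y in Prod.mk x ⁻¹' s, h y ∂ν ∂μ
      = ∫⁻ y, h y * ∫⁻ x in (·, y) ⁻¹' s, g x ∂μ ∂ν := by
  have hK : AEMeasurable (s.indicator fun p => g p.1 * h p.2) (μ.prod ν) :=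
    (hg.comp_fst.mul hh.comp_snd).indicator hs
  calc ∫⁻ x, g x * ∫⁻ y in Prod.mk x ⁻¹' s, h y ∂ν ∂μ
      = ∫⁻ x, ∫⁻ y, s.indicator (fun p => g p.1 * h p.2) (x, y) ∂ν ∂μ := by
        refine lintegral_congr fun x => ?_
        rw [← lintegral_const_mul'' _ hh.restrict,
          ← lintegral_indicator (measurable_prodMk_left hs)]
        rfl
    _ = ∫⁻ y, ∫⁻ x, s.indicator (fun p => g p.1 * h p.2) (x, y) ∂μ ∂ν :=
        lintegral_lintegral_swap hK
    _ = ∫⁻ y, h y * ∫⁻ x in (·, y) ⁻¹' s, g x ∂μ ∂ν := by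
        refine lintegral_congr fun y => ?_
        rw [← lintegral_const_mul'' _ hg.restrict,
          ← lintegral_indicator (measurable_prodMk_right hs)]
        simp only [mul_comm (h y)]
        rfl

theorem measurableSet_setOf_mem_uIoc {α δ : Type*} [LinearOrder α] [TopologicalSpace α]
    [OrderClosedTopology α] [SecondCountableTopology α] [MeasurableSpace α]
    [OpensMeasurableSpace α] [MeasurableSpace δ] {a b c : δ → α} (ha : Measurable a)
    (hb : Measurable b) (hc : Measurable c) : MeasurableSet {x | c x ∈ Ι (a x) (b x)} :=
  (measurableSet_lt (ha.min hb) hc).inter (measurableSet_le hc (ha.max hb))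

theorem integral_sq_primitive_gaussian_le_general (f : ℝ → ℝ) (hf : Measurable f) :
    (∫⁻ x : ℝ, ENNReal.ofReal ((∫ t in (0:ℝ)..x, f t) ^ 2 * stdGaussianDensity x))
      ≤ ∫⁻ y : ℝ, ENNReal.ofReal ((f y) ^ 2 * stdGaussianDensity y) := by
  set S : Set (ℝ × ℝ) := {p | p.2 ∈ Ι 0 p.1}
  have hS : MeasurableSet S :=
    measurableSet_setOf_mem_uIoc measurable_const measurable_fst measurable_snd
  have hG : ∀ x, ENNReal.ofReal ((∫ t in (0:ℝ)..x, f t) ^ 2 * stdGaussianDensity x)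
      ≤ ENNReal.ofReal (|x| * stdGaussianDensity x)
        * ∫⁻ y in Ι 0 x, ENNReal.ofReal (f y ^ 2) := by
    intro x
    rw [ENNReal.ofReal_mul (sq_nonneg _), ENNReal.ofReal_mul (abs_nonneg x), mul_right_comm]
    gcongr
    have h := ofReal_sq_intervalIntegral_le (μ := volume) (a := 0) (b := x) hf.aemeasurable.restrict
    rwa [Real.volume_uIoc, sub_zero] at h
  calc (∫⁻ x : ℝ, ENNReal.ofReal ((∫ t in (0:ℝ)..x, f t) ^ 2 * stdGaussianDensity x))
      ≤ ∫⁻ x, ENNReal.ofReal (|x| * stdGaussianDensity x)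
          * ∫⁻ y in Prod.mk x ⁻¹' S, ENNReal.ofReal (f y ^ 2) := lintegral_mono hG
    _ = ∫⁻ y, ENNReal.ofReal (f y ^ 2)
          * ∫⁻ x in (·, y) ⁻¹' S, ENNReal.ofReal (|x| * stdGaussianDensity x) :=
        lintegral_mul_setLIntegral_comm hS (by fun_prop) (by fun_prop)
    _ = ∫⁻ y : ℝ, ENNReal.ofReal ((f y) ^ 2 * stdGaussianDensity y) := by
        refine lintegral_congr fun y => ?_
        rw [ENNReal.ofReal_mul (sq_nonneg _)]
        exact congrArg _ (stdGaussianDensity.lintegral_setOf_mem_uIoc_abs_mul y)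

/-- If `f` is measurable with `∫ f² φ dx < ∞` (`φ` the standard Gaussian density) and
`G x = ∫_0^x f`, then `∫ G² φ dx ≤ ∫ f² φ dx`, i.e. `E[G(B₁)²] ≤ E[f(B₁)²]`. -/
theorem integral_sq_primitive_gaussian_le (f : ℝ → ℝ) (hf : Measurable f)
    (hloc : ∀ x : ℝ, IntervalIntegrable f volume 0 x)
    (hfin : (∫⁻ y : ℝ, ENNReal.ofReal ((f y) ^ 2 * stdGaussianDensity y)) < ⊤) :
    (∫⁻ x : ℝ, ENNReal.ofReal ((∫ t in (0:ℝ)..x, f t) ^ 2 * stdGaussianDensity x))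
      ≤ ∫⁻ y : ℝ, ENNReal.ofReal ((f y) ^ 2 * stdGaussianDensity y) :=
  integral_sq_primitive_gaussian_le_general f hf
end

section
/- Suppose W : ℝ → ℝ satisfies |W(x)| ≤ A (|x| log log(|x| + 1/|x| + 36))^{1/2} for all x ≠ 0 and some constant A > 0. Then for every λ ≥ e^{36}, the rescaled function W_λ(t) = W(λt)/(2λ log log λ)^{1/2} satisfies |W_λ(t)| ≤ 2A (|t| log log(|t| + 1/|t| + 36))^{1/2} for all t ≠ 0. -/
/-!
Write `g x = log log (|x| + 1/|x| + 36)`. For `λ ≥ 1` the argument of `g` at `λ x` is at most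
`λ` times the argument at `x`; since both logarithms involved are at least `2`, and `a + b ≤ a b`
for `a, b ≥ 2`, this gives `g (λ x) ≤ log log λ + g x`. As both summands are at least `1`, this
is at most `2 log log λ · g x`, so the growth bound at `λ t` costs exactly the normalising factor
`(2 λ log log λ)^{1/2}`.
-/

open Real

noncomputable def lilGauge (x : ℝ) : ℝ := log (log (|x| + 1 / |x| + 36))

lemma exp_three_lt_thirtySix : exp 3 < 36 := by
  have h : exp 3 = exp 1 ^ 3 := by rw [← exp_nat_mul]; norm_num
  rw [h]
  calc exp 1 ^ 3 < 3 ^ 3 := by gcongr; exact exp_one_lt_three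
    _ < 36 := by norm_num

lemma three_le_log_of_exp_three_le {x : ℝ} (hx : exp 3 ≤ x) : 3 ≤ log x :=
  (le_log_iff_exp_le (lt_of_lt_of_le (exp_pos 3) hx)).mpr hx

lemma one_le_log_log_of_exp_three_le {x : ℝ} (hx : exp 3 ≤ x) : 1 ≤ log (log x) := by
  have h3 := three_le_log_of_exp_three_le hx
  rw [le_log_iff_exp_le (by linarith)]
  linarith [exp_one_lt_three]

lemma exp_three_le_abs_add_one_div_add (x : ℝ) : exp 3 ≤ |x| + 1 / |x| + 36 := by
  have : 0 ≤ |x| + 1 / |x| := by positivity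
  linarith [exp_three_lt_thirtySix]

lemma one_le_lilGauge (x : ℝ) : 1 ≤ lilGauge x :=
  one_le_log_log_of_exp_three_le (exp_three_le_abs_add_one_div_add x)

lemma mul_add_one_div_mul_add_le {lam s c : ℝ} (hlam : 1 ≤ lam) (hs : 0 < s) (hc : 0 ≤ c) :
    lam * s + 1 / (lam * s) + c ≤ lam * (s + 1 / s + c) := by
  have hinv : 1 / (lam * s) ≤ lam * (1 / s) :=
    calc 1 / (lam * s) ≤ 1 / s := one_div_le_one_div_of_le hs (le_mul_of_one_le_left hs.le hlam)
      _ ≤ lam * (1 / s) := le_mul_of_one_le_left (by positivity) hlam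
  nlinarith

lemma log_log_mul_le {x y : ℝ} (hx : 2 ≤ log x) (hy : 2 ≤ log y) :
    log (log (x * y)) ≤ log (log x) + log (log y) := by
  have hx0 : x ≠ 0 := by rintro rfl; norm_num at hx
  have hy0 : y ≠ 0 := by rintro rfl; norm_num at hy
  have hlogx : log x ≠ 0 := by linarith
  have hlogy : log y ≠ 0 := by linarith
  calc log (log (x * y)) = log (log x + log y) := by rw [log_mul hx0 hy0]
    _ ≤ log (log x * log y) := log_le_log (by linarith) (add_le_mul hx hy)
    _ = log (log x) + log (log y) := log_mul hlogx hlogy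

lemma lilGauge_mul_le {lam : ℝ} (hlam : exp 3 ≤ lam) {x : ℝ} (hx : x ≠ 0) :
    lilGauge (lam * x) ≤ log (log lam) + lilGauge x := by
  have hlam0 : 0 < lam := lt_of_lt_of_le (exp_pos 3) hlam
  have hlam1 : 1 ≤ lam := le_trans (one_le_exp (by norm_num)) hlam
  have hargC := exp_three_le_abs_add_one_div_add (lam * x)
  have hargB := exp_three_le_abs_add_one_div_add x
  have hC : |lam * x| + 1 / |lam * x| + 36 ≤ lam * (|x| + 1 / |x| + 36) := by
    rw [abs_mul, abs_of_pos hlam0]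
    exact mul_add_one_div_mul_add_le hlam1 (abs_pos.mpr hx) (by norm_num)
  calc lilGauge (lam * x) ≤ log (log (lam * (|x| + 1 / |x| + 36))) := by
        refine log_le_log (by linarith [three_le_log_of_exp_three_le hargC]) (log_le_log ?_ hC)
        linarith [exp_pos 3]
    _ ≤ log (log lam) + lilGauge x :=
        log_log_mul_le (by linarith [three_le_log_of_exp_three_le hlam])
          (by linarith [three_le_log_of_exp_three_le hargB])

lemma lilGauge_mul_le_two_mul {lam : ℝ} (hlam : exp 3 ≤ lam) {x : ℝ} (hx : x ≠ 0) :
    lilGauge (lam * x) ≤ 2 * log (log lam) * lilGauge x := by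
  have := lilGauge_mul_le hlam hx
  nlinarith [one_le_log_log_of_exp_three_le hlam, one_le_lilGauge x]

lemma abs_mul_mul_lilGauge_le {lam : ℝ} (hlam : exp 3 ≤ lam) {x : ℝ} (hx : x ≠ 0) :
    |lam * x| * lilGauge (lam * x) ≤ 2 * lam * log (log lam) * (|x| * lilGauge x) := by
  have hlam0 : 0 < lam := lt_of_lt_of_le (exp_pos 3) hlam
  rw [abs_mul, abs_of_pos hlam0]
  calc lam * |x| * lilGauge (lam * x) ≤ lam * |x| * (2 * log (log lam) * lilGauge x) := by
        gcongr; exact lilGauge_mul_le_two_mul hlam hx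
    _ = 2 * lam * log (log lam) * (|x| * lilGauge x) := by ring

/-- If `|W(x)| ≤ A (|x| log log(|x| + 1/|x| + 36))^{1/2}` for all `x ≠ 0`, then for every
`λ ≥ e^{36}`, the rescaled function `W_λ(t) = W(λt)/(2λ log log λ)^{1/2}` satisfies
`|W_λ(t)| ≤ 2A (|t| log log(|t| + 1/|t| + 36))^{1/2}` for all `t ≠ 0`. -/
theorem rescaled_LIL_bound (W : ℝ → ℝ) (A : ℝ) (hA : 0 < A)
    (hW : ∀ x : ℝ, x ≠ 0 →
      |W x| ≤ A * Real.sqrt (|x| * Real.log (Real.log (|x| + 1 / |x| + 36)))) :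
    ∀ lam : ℝ, Real.exp 36 ≤ lam → ∀ t : ℝ, t ≠ 0 →
      |W (lam * t) / Real.sqrt (2 * lam * Real.log (Real.log lam))|
        ≤ 2 * A * Real.sqrt (|t| * Real.log (Real.log (|t| + 1 / |t| + 36))) := by
  intro lam hlam t ht
  have hlam3 : exp 3 ≤ lam := (exp_le_exp.mpr (by norm_num)).trans hlam
  have hlam0 : 0 < lam := lt_of_lt_of_le (exp_pos 3) hlam3
  have hnorm : 0 < 2 * lam * log (log lam) := by
    have := one_le_log_log_of_exp_three_le hlam3
    positivity
  rw [abs_div, abs_of_nonneg (sqrt_nonneg _), div_le_iff₀ (sqrt_pos.mpr hnorm)]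
  calc |W (lam * t)| ≤ A * sqrt (|lam * t| * lilGauge (lam * t)) :=
        hW _ (mul_ne_zero hlam0.ne' ht)
    _ ≤ A * sqrt (2 * lam * log (log lam) * (|t| * lilGauge t)) := by
        gcongr A * sqrt ?_; exact abs_mul_mul_lilGauge_le hlam3 ht
    _ = A * sqrt (|t| * lilGauge t) * sqrt (2 * lam * log (log lam)) := by
        rw [sqrt_mul hnorm.le]; ring
    _ ≤ 2 * A * sqrt (|t| * lilGauge t) * sqrt (2 * lam * log (log lam)) := by
        gcongr; linarith
end
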